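/- Let S be a finite set of points in the Euclidean plane, G the weighted unit-disk graph on S, s ∈ S, and ε > 0. For a vertex x in the connected component of s, let ℓ_x denote the minimum number of edges among all shortest paths from s to x, and define τ_x = d_G(s,x) + (ℓ_x − 1)·(ε/2). If ⟨z₀, …, z_t⟩ with t ≥ 2 is an edge-minimal shortest path from s = z₀ to a = z_t and r' = z_{t−2}, then τ_a > τ_{r'} + 1. -/

import Mathlib

noncomputable section

abbrev Pt := EuclideanSpace ℝ (Fin 2)

/-- The weighted unit-disk graph on a finite point set `S`: vertices are the points of
`S`, two distinct points are adjacent iff their Euclidean distance is at most 1. -/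
def UDG (S : Finset Pt) : SimpleGraph {x : Pt // x ∈ S} where
  Adj a b := a ≠ b ∧ dist (a : Pt) (b : Pt) ≤ 1
  symm := by
    constructor
    intro a b hab
    exact ⟨hab.1.symm, by rw [dist_comm]; exact hab.2⟩
  loopless := by
    constructor
    intro a ha
    exact ha.1 rfl

/-- The (weighted) length of a walk: the sum of the Euclidean lengths of its edges. -/
def wlen {S : Finset Pt} {u v : {x : Pt // x ∈ S}} (p : (UDG S).Walk u v) : ℝ :=
  (p.darts.map (fun d => dist (d.toProd.1 : Pt) (d.toProd.2 : Pt))).sum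

/-- The shortest-path distance in the weighted unit-disk graph. -/
def dG (S : Finset Pt) (u v : {x : Pt // x ∈ S}) : ℝ :=
  sInf {L : ℝ | ∃ p : (UDG S).Walk u v, wlen p = L}

/-!
Cut the edge-minimal shortest path `p` from `s` to `a` at `r'`, two edges before its end.
The initial piece is again a shortest path, so `d_G(s,a) = d_G(s,r') + w` where `w` is the
weight of the last two edges, and `ℓ_{r'} ≤ ℓ_a - 2`. If `r'` were within distance `1` of `a`,
replacing the last two edges by the single edge `r'a` would give a shortest path with fewer
edges (for `r' = a`, simply drop them). Hence `w ≥ ‖r' - a‖ > 1`.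
-/

open SimpleGraph (Walk)

section

variable {S : Finset Pt} {u v w : {x : Pt // x ∈ S}}

def IsShortest (p : (UDG S).Walk u v) : Prop :=
  wlen p = dG S u v

def IsEdgeMinimalShortest (p : (UDG S).Walk u v) : Prop :=
  IsShortest p ∧ ∀ p' : (UDG S).Walk u v, IsShortest p' → p.length ≤ p'.length

@[simp]
lemma wlen_nil : wlen (Walk.nil : (UDG S).Walk u u) = 0 := rfl

@[simp]
lemma wlen_cons (h : (UDG S).Adj u v) (p : (UDG S).Walk v w) :
    wlen (Walk.cons h p) = dist (u : Pt) v + wlen p := by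
  simp [wlen]

@[simp]
lemma wlen_append (p : (UDG S).Walk u v) (p' : (UDG S).Walk v w) :
    wlen (p.append p') = wlen p + wlen p' := by
  simp [wlen, Walk.darts_append]

lemma dist_le_wlen (p : (UDG S).Walk u v) : dist (u : Pt) v ≤ wlen p := by
  induction p with
  | nil => simp
  | cons _ p ih =>
    rw [wlen_cons]
    exact (dist_triangle _ _ _).trans (by gcongr)

lemma wlen_nonneg (p : (UDG S).Walk u v) : 0 ≤ wlen p :=
  dist_nonneg.trans (dist_le_wlen p)

lemma dG_le_wlen (p : (UDG S).Walk u v) : dG S u v ≤ wlen p :=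
  csInf_le ⟨0, fun _ ⟨p', hp'⟩ => hp' ▸ wlen_nonneg p'⟩ ⟨p, rfl⟩

lemma isShortest_of_wlen_le {p : (UDG S).Walk u v} (h : wlen p ≤ dG S u v) : IsShortest p :=
  le_antisymm h (dG_le_wlen p)

lemma IsShortest.of_append_left {q p₁ : (UDG S).Walk u v} {p₂ : (UDG S).Walk v w}
    (hq : IsShortest q) (h : IsShortest (p₁.append p₂)) : IsShortest p₁ := by
  apply isShortest_of_wlen_le
  have := dG_le_wlen (q.append p₂)
  simp only [IsShortest, wlen_append] at h hq this
  linarith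

lemma IsEdgeMinimalShortest.one_lt_dist {p : (UDG S).Walk u w}
    (hp : IsEdgeMinimalShortest p) {p₁ : (UDG S).Walk u v} {p₂ : (UDG S).Walk v w}
    (hsplit : p₁.append p₂ = p) (hlen : 2 ≤ p₂.length) : 1 < dist (v : Pt) w := by
  obtain ⟨hshort, hmin⟩ := hp
  subst hsplit
  rw [Walk.length_append] at hmin
  by_contra! hnear
  by_cases hvw : v = w
  · subst hvw
    have hp₁ : IsShortest p₁ := isShortest_of_wlen_le <| by
      have := wlen_nonneg p₂
      simp only [IsShortest, wlen_append] at hshort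
      linarith
    have := hmin p₁ hp₁
    omega
  · have hadj : (UDG S).Adj v w := ⟨hvw, hnear⟩
    have hshortcut : IsShortest (p₁.append (Walk.cons hadj Walk.nil)) :=
      isShortest_of_wlen_le <| by
        have := dist_le_wlen p₂
        simp only [IsShortest, wlen_append] at hshort
        simp only [wlen_append, wlen_cons, wlen_nil]
        linarith
    have := hmin _ hshortcut
    simp only [Walk.length_append, Walk.length_cons, Walk.length_nil] at this
    omega

end

/-- Inequality in the proof of Lemma 7 (lem-correct'): with `τ_x = d_G(s,x) + (ℓ_x-1)·(ε/2)`
where `ℓ_x` is the minimum number of edges among shortest paths from `s` to `x`, an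
edge-minimal shortest path `p` from `s` to `a` with `t ≥ 2` edges and `r' = z_{t-2}`
satisfies `τ_a > τ_{r'} + 1`. Here `ℓ_a = p.length` and `ℓ_{r'} = q.length` for an
edge-minimal shortest path `q` from `s` to `r'`. -/
theorem stmt_11 (S : Finset Pt) (s a : {x : Pt // x ∈ S}) (ε : ℝ) (hε : 0 < ε)
    (p : (UDG S).Walk s a) (hsp : wlen p = dG S s a)
    (hpmin : ∀ p' : (UDG S).Walk s a, wlen p' = dG S s a → p.length ≤ p'.length)
    (ht : 2 ≤ p.length)
    (r' : {x : Pt // x ∈ S}) (hr' : r' = p.getVert (p.length - 2))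
    (q : (UDG S).Walk s r') (hsq : wlen q = dG S s r')
    (hqmin : ∀ q' : (UDG S).Walk s r', wlen q' = dG S s r' → q.length ≤ q'.length) :
    (dG S s r' + ((q.length : ℝ) - 1) * (ε / 2)) + 1
      < dG S s a + ((p.length : ℝ) - 1) * (ε / 2) := by
  subst hr'
  have hsplit := p.append_take_drop_eq (p.length - 2)
  have hp : IsEdgeMinimalShortest p := ⟨hsp, hpmin⟩
  have hpre : IsShortest (p.take (p.length - 2)) :=
    IsShortest.of_append_left hsq (by rw [hsplit]; exact hsp)
  have hqlen : q.length ≤ p.length := by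
    have := hqmin _ hpre
    rw [Walk.take_length] at this
    omega
  have hfar := hp.one_lt_dist hsplit (by rw [Walk.drop_length]; omega)
  have hdist : dG S s (p.getVert (p.length - 2)) + 1 < dG S s a := by
    have hw := congrArg wlen hsplit
    rw [wlen_append, hpre, hsp] at hw
    linarith [dist_le_wlen (p.drop (p.length - 2))]
  have : ((q.length : ℝ) - 1) * (ε / 2) ≤ ((p.length : ℝ) - 1) * (ε / 2) := by
    gcongr
  linarith
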